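/- arXiv:1604.03358 — 9 statements merged into one kernel-verified Lean document; each statement's English description precedes it below -/
import Mathlib

section
/- If f : [0,∞) → ℝ is increasing and (h-s)₁-convex, and g : [0,∞) → [0,∞) is convex, then the composition f∘g is (h-s)₁-convex. -/
open Set

theorem comp_convex_hs1_convex (h : ℝ → ℝ) (s : ℝ) (f g : ℝ → ℝ)
    (hh_nonneg : ∀ t, 0 ≤ h t) (hh_ne : ∃ t, h t ≠ 0) (hs : s ∈ Ioc (0:ℝ) 1)
    (hf_nonneg : ∀ x, 0 ≤ x → 0 ≤ f x)
    (hf_mono : ∀ x y, 0 ≤ x → x ≤ y → f x ≤ f y)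
    (hf : ∀ x y t, 0 ≤ x → 0 ≤ y → t ∈ Icc (0:ℝ) 1 →
      f (t * x + (1 - t) * y) ≤ h t ^ s * f x + (1 - h t ^ s) * f y)
    (hg_nonneg : ∀ x, 0 ≤ x → 0 ≤ g x)
    (hg : ∀ x y t, 0 ≤ x → 0 ≤ y → t ∈ Icc (0:ℝ) 1 →
      g (t * x + (1 - t) * y) ≤ t * g x + (1 - t) * g y) :
    (∀ x, 0 ≤ x → 0 ≤ f (g x)) ∧
    ∀ x y t, 0 ≤ x → 0 ≤ y → t ∈ Icc (0:ℝ) 1 →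
      f (g (t * x + (1 - t) * y)) ≤ h t ^ s * f (g x) + (1 - h t ^ s) * f (g y) := by
  constructor
  · intro x hx
    exact hf_nonneg _ (hg_nonneg _ hx)
  · intro x y t hx hy ht
    have hz : (0:ℝ) ≤ t * x + (1 - t) * y := by
      nlinarith [ht.1, ht.2, mul_nonneg ht.1 hx, mul_nonneg (sub_nonneg.2 ht.2) hy]
    have h1 : f (g (t * x + (1 - t) * y)) ≤ f (t * g x + (1 - t) * g y) :=
      hf_mono _ _ (hg_nonneg _ hz) (hg x y t hx hy ht)
    exact h1.trans (hf (g x) (g y) t (hg_nonneg _ hx) (hg_nonneg _ hy) ht)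
end

section
/- If f : [0,∞) → ℝ is increasing and (h-s)₂-convex, and g : [0,∞) → [0,∞) is convex, then the composition f∘g is (h-s)₂-convex. -/
open Set

theorem comp_convex_hs2_convex (h : ℝ → ℝ) (s : ℝ) (f g : ℝ → ℝ)
    (hh_nonneg : ∀ t, 0 ≤ h t) (hh_ne : ∃ t, h t ≠ 0) (hs : s ∈ Ioc (0:ℝ) 1)
    (hf_nonneg : ∀ x, 0 ≤ x → 0 ≤ f x)
    (hf_mono : ∀ x y, 0 ≤ x → x ≤ y → f x ≤ f y)
    (hf : ∀ u v t, 0 ≤ u → 0 ≤ v → t ∈ Icc (0:ℝ) 1 →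
      f (t * u + (1 - t) * v) ≤ h t ^ s * f u + h (1 - t) ^ s * f v)
    (hg_nonneg : ∀ x, 0 ≤ x → 0 ≤ g x)
    (hg : ∀ u v t, 0 ≤ u → 0 ≤ v → t ∈ Icc (0:ℝ) 1 →
      g (t * u + (1 - t) * v) ≤ t * g u + (1 - t) * g v) :
    (∀ x, 0 ≤ x → 0 ≤ f (g x)) ∧
    ∀ u v t, 0 ≤ u → 0 ≤ v → t ∈ Icc (0:ℝ) 1 →
      f (g (t * u + (1 - t) * v)) ≤ h t ^ s * f (g u) + h (1 - t) ^ s * f (g v) := by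
  constructor
  · intro x hx
    exact hf_nonneg _ (hg_nonneg x hx)
  · intro u v t hu hv ht
    have hx : 0 ≤ t * u + (1 - t) * v := by
      have h1 := ht.1; have h2 := ht.2
      have : 0 ≤ 1 - t := by linarith
      positivity
    have h1 : g (t * u + (1 - t) * v) ≤ t * g u + (1 - t) * g v := hg u v t hu hv ht
    have h2 : f (g (t * u + (1 - t) * v)) ≤ f (t * g u + (1 - t) * g v) :=
      hf_mono _ _ (hg_nonneg _ hx) h1
    exact h2.trans (hf (g u) (g v) t (hg_nonneg u hu) (hg_nonneg v hv) ht)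
end

section
/- Let h ∈ L¹[0,1] be nonnegative, s ∈ (0,1], and F : [0,∞) → [0,∞) be (h-s)₂-convex and integrable on [a,b] ⊆ [0,∞) with a < b. Then (1/(b-a))·∫ₐᵇ F(x) dx ≤ K·(F(a) + F(b)), where K = ∫₀¹ h(t)^s dt. -/
/-!
Substituting `x = t * b + (1 - t) * a` turns the mean of `F` over `[a, b]` into
`∫₀¹ F (t * b + (1 - t) * a) dt`. Integrating the convexity inequality with `u = b`, `v = a`
bounds this by `F b ∫₀¹ h(t)^s dt + F a ∫₀¹ h(1 - t)^s dt`, and the reflection `t ↦ 1 - t`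
shows that both integrals equal `K`.
-/

open Set intervalIntegral

section UnitInterval

variable {F : ℝ → ℝ} {a b : ℝ}

lemma IntervalIntegrable.comp_segment_unitInterval (hab : a ≠ b)
    (hF : IntervalIntegrable F MeasureTheory.volume a b) :
    IntervalIntegrable (fun t => F (t * b + (1 - t) * a)) MeasureTheory.volume 0 1 := by
  have hba : b - a ≠ 0 := sub_ne_zero.mpr hab.symm
  have hcomp := (hF.comp_add_right a).comp_mul_left (c := b - a)
  simp only [sub_self, zero_div, div_self hba] at hcomp
  convert hcomp using 3
  ring

lemma inv_sub_mul_integral_eq_integral_segment (hab : a ≠ b) :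
    (b - a)⁻¹ * ∫ x in a..b, F x = ∫ t in (0:ℝ)..1, F (t * b + (1 - t) * a) := by
  have hba : b - a ≠ 0 := sub_ne_zero.mpr hab.symm
  have hsub := integral_comp_mul_add (a := 0) (b := 1) F hba a
  simp only [mul_zero, zero_add, mul_one, sub_add_cancel, smul_eq_mul] at hsub
  rw [← hsub]
  congr 1 with t
  congr 1
  ring

end UnitInterval

lemma integral_comp_one_sub_unitInterval (g : ℝ → ℝ) :
    ∫ t in (0:ℝ)..1, g (1 - t) = ∫ t in (0:ℝ)..1, g t := by
  simp [integral_comp_sub_left]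

lemma integral_segment_le_integral_weight_mul {F w : ℝ → ℝ} {x y : ℝ}
    (hw : IntervalIntegrable w MeasureTheory.volume 0 1)
    (hF : IntervalIntegrable (fun t => F (t * y + (1 - t) * x)) MeasureTheory.volume 0 1)
    (hle : ∀ t ∈ Icc (0:ℝ) 1, F (t * y + (1 - t) * x) ≤ w t * F y + w (1 - t) * F x) :
    ∫ t in (0:ℝ)..1, F (t * y + (1 - t) * x) ≤ (∫ t in (0:ℝ)..1, w t) * (F x + F y) := by
  have hw_refl : IntervalIntegrable (fun t => w (1 - t)) MeasureTheory.volume 0 1 := by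
    simpa using (hw.comp_sub_left 1).symm
  calc ∫ t in (0:ℝ)..1, F (t * y + (1 - t) * x)
      ≤ ∫ t in (0:ℝ)..1, (w t * F y + w (1 - t) * F x) :=
        integral_mono_on zero_le_one hF ((hw.mul_const _).add (hw_refl.mul_const _)) hle
    _ = (∫ t in (0:ℝ)..1, w t) * (F x + F y) := by
        rw [integral_add (hw.mul_const _) (hw_refl.mul_const _), integral_mul_const,
          integral_mul_const, integral_comp_one_sub_unitInterval w]
        ring

theorem hadamard_right_hs2_general (h : ℝ → ℝ) (s : ℝ) (F : ℝ → ℝ) (a b : ℝ)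
    (hh_int : IntervalIntegrable (fun t => h t ^ s) MeasureTheory.volume 0 1)
    (hF : ∀ u v t, 0 ≤ u → 0 ≤ v → t ∈ Icc (0:ℝ) 1 →
      F (t * u + (1 - t) * v) ≤ h t ^ s * F u + h (1 - t) ^ s * F v)
    (ha : 0 ≤ a) (hab : a < b)
    (hF_int : IntervalIntegrable F MeasureTheory.volume a b) :
    (1 / (b - a)) * ∫ x in a..b, F x ≤
      (∫ t in (0:ℝ)..1, h t ^ s) * (F a + F b) := by
  rw [one_div, inv_sub_mul_integral_eq_integral_segment hab.ne]
  exact integral_segment_le_integral_weight_mul hh_int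
    (hF_int.comp_segment_unitInterval hab.ne)
    fun t ht => hF b a t (ha.trans hab.le) ha ht

theorem hadamard_right_hs2 (h : ℝ → ℝ) (s : ℝ) (F : ℝ → ℝ) (a b : ℝ)
    (hh_nonneg : ∀ t, 0 ≤ h t) (hh_ne : ∃ t, h t ≠ 0) (hs : s ∈ Ioc (0:ℝ) 1)
    (hh_int : IntervalIntegrable (fun t => h t ^ s) MeasureTheory.volume 0 1)
    (hF_nonneg : ∀ x, 0 ≤ x → 0 ≤ F x)
    (hF : ∀ u v t, 0 ≤ u → 0 ≤ v → t ∈ Icc (0:ℝ) 1 →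
      F (t * u + (1 - t) * v) ≤ h t ^ s * F u + h (1 - t) ^ s * F v)
    (ha : 0 ≤ a) (hab : a < b)
    (hF_int : IntervalIntegrable F MeasureTheory.volume a b) :
    (1 / (b - a)) * ∫ x in a..b, F x ≤
      (∫ t in (0:ℝ)..1, h t ^ s) * (F a + F b) :=
  hadamard_right_hs2_general h s F a b hh_int hF ha hab hF_int
end

section
/- If F : [0,∞) → [0,∞) is (h-s)₂-convex with h(t) = t and F integrable on [a,b], a < b, then (1/(b-a))·∫ₐᵇ F(x) dx ≤ (F(a)+F(b))/(s+1). -/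
/-! The chord bound `F x ≤ ((b - x)/(b - a))^s F a + ((x - a)/(b - a))^s F b` on `[a, b]` is
`s`-convexity at `t = (b - x)/(b - a)`. Integrating it, both weights have integral `(b - a)/(s + 1)`
after the affine substitution onto `[0, 1]`, where `∫₀¹ t^s dt = 1/(s + 1)`. -/

open Set intervalIntegral

def SConvexOn (s : ℝ) (D : Set ℝ) (F : ℝ → ℝ) : Prop :=
  ∀ ⦃u⦄, u ∈ D → ∀ ⦃v⦄, v ∈ D → ∀ ⦃t⦄, t ∈ Icc (0 : ℝ) 1 →
    F (t * u + (1 - t) * v) ≤ t ^ s * F u + (1 - t) ^ s * F v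

theorem integral_sub_div_sub_rpow {s : ℝ} (hs : -1 < s) (a b : ℝ) :
    ∫ x in a..b, ((x - a) / (b - a)) ^ s = (b - a) / (s + 1) := by
  rcases eq_or_ne a b with rfl | hab
  · simp
  have hba : b - a ≠ 0 := sub_ne_zero.mpr hab.symm
  rw [integral_comp_sub_right (fun x => (x / (b - a)) ^ s), integral_comp_div (fun x => x ^ s) hba,
    sub_self, zero_div, div_self hba, integral_rpow (Or.inl hs), Real.one_rpow,
    Real.zero_rpow (by linarith), smul_eq_mul]
  ring

theorem integral_sub_div_sub_rpow' {s : ℝ} (hs : -1 < s) (a b : ℝ) :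
    ∫ x in a..b, ((b - x) / (b - a)) ^ s = (b - a) / (s + 1) := by
  have hreflect := integral_comp_sub_left (fun x => ((x - a) / (b - a)) ^ s) (a + b) (a := a) (b := b)
  simp only [add_sub_cancel_right, add_sub_cancel_left,
    show ∀ x, a + b - x - a = b - x from fun x => by ring] at hreflect
  rw [hreflect, integral_sub_div_sub_rpow hs]

namespace SConvexOn

variable {s : ℝ} {D : Set ℝ} {F : ℝ → ℝ} {a b : ℝ}

theorem le_rpow_mul_add_rpow_mul (hF : SConvexOn s D F) (ha : a ∈ D) (hb : b ∈ D)
    (hab : a < b) {x : ℝ} (hx : x ∈ Icc a b) :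
    F x ≤ ((b - x) / (b - a)) ^ s * F a + ((x - a) / (b - a)) ^ s * F b := by
  have hba : 0 < b - a := sub_pos.mpr hab
  have hcomp : 1 - (b - x) / (b - a) = (x - a) / (b - a) := by field_simp; ring
  have ht : (b - x) / (b - a) ∈ Icc (0 : ℝ) 1 :=
    ⟨div_nonneg (by linarith [hx.2]) hba.le, (div_le_one hba).mpr (by linarith [hx.1])⟩
  have hcombo : (b - x) / (b - a) * a + (x - a) / (b - a) * b = x := by
    field_simp; ring
  simpa only [hcomp, hcombo] using hF ha hb ht

theorem integral_le (hF : SConvexOn s D F) (hs : 0 ≤ s) (ha : a ∈ D) (hb : b ∈ D) (hab : a < b)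
    (hF_int : IntervalIntegrable F MeasureTheory.volume a b) :
    ∫ x in a..b, F x ≤ (b - a) * (F a + F b) / (s + 1) := by
  have hweight_cont (g : ℝ → ℝ) (hg : Continuous g) (c : ℝ) :
      Continuous fun x => (g x / (b - a)) ^ s * c :=
    ((hg.div_const _).rpow_const fun _ => Or.inr hs).mul continuous_const
  have hleft := hweight_cont (fun x => b - x) (by fun_prop) (F a)
  have hright := hweight_cont (fun x => x - a) (by fun_prop) (F b)
  calc ∫ x in a..b, F x
      ≤ ∫ x in a..b, ((b - x) / (b - a)) ^ s * F a + ((x - a) / (b - a)) ^ s * F b :=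
        integral_mono_on hab.le hF_int ((hleft.add hright).intervalIntegrable a b)
          fun x hx => hF.le_rpow_mul_add_rpow_mul ha hb hab hx
    _ = (b - a) * (F a + F b) / (s + 1) := by
        rw [integral_add (hleft.intervalIntegrable _ _) (hright.intervalIntegrable _ _),
          integral_mul_const, integral_mul_const, integral_sub_div_sub_rpow' (by linarith),
          integral_sub_div_sub_rpow (by linarith)]
        ring

end SConvexOn

theorem hadamard_right_sconvex_general (s : ℝ) (F : ℝ → ℝ) (a b : ℝ)
    (hs : s ∈ Ioc (0:ℝ) 1)
    (hF : ∀ u v t, 0 ≤ u → 0 ≤ v → t ∈ Icc (0:ℝ) 1 →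
      F (t * u + (1 - t) * v) ≤ t ^ s * F u + (1 - t) ^ s * F v)
    (ha : 0 ≤ a) (hab : a < b)
    (hF_int : IntervalIntegrable F MeasureTheory.volume a b) :
    (1 / (b - a)) * ∫ x in a..b, F x ≤ (F a + F b) / (s + 1) := by
  have hconv : SConvexOn s (Ici 0) F := fun u hu v hv t ht => hF u v t hu hv ht
  have hba : 0 < b - a := sub_pos.mpr hab
  calc (1 / (b - a)) * ∫ x in a..b, F x
      ≤ (1 / (b - a)) * ((b - a) * (F a + F b) / (s + 1)) :=
        mul_le_mul_of_nonneg_left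
          (hconv.integral_le hs.1.le ha (mem_Ici.mpr (by linarith)) hab hF_int) (by positivity)
    _ = (F a + F b) / (s + 1) := by field_simp

theorem hadamard_right_sconvex (s : ℝ) (F : ℝ → ℝ) (a b : ℝ)
    (hs : s ∈ Ioc (0:ℝ) 1)
    (hF_nonneg : ∀ x, 0 ≤ x → 0 ≤ F x)
    (hF : ∀ u v t, 0 ≤ u → 0 ≤ v → t ∈ Icc (0:ℝ) 1 →
      F (t * u + (1 - t) * v) ≤ t ^ s * F u + (1 - t) ^ s * F v)
    (ha : 0 ≤ a) (hab : a < b)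
    (hF_int : IntervalIntegrable F MeasureTheory.volume a b) :
    (1 / (b - a)) * ∫ x in a..b, F x ≤ (F a + F b) / (s + 1) :=
  hadamard_right_sconvex_general s F a b hs hF ha hab hF_int
end

section
/- Let F : I → ℝ be twice differentiable on an open interval I containing [a,b] with a < b, and suppose F'' is integrable on [a,b]. Then (F'(a)+F'(b))/2 − (1/(b-a))·∫ₐᵇ F'(x) dx = ((b-a)/2)·∫₀¹ (1−2t)·F''(t·a+(1−t)·b) dt. -/
/-!
Substituting `x = t a + (1 - t) b` turns the right-hand side into
`(1 / (2 (b - a))) ∫ₐᵇ (2x - a - b) F''(x) dx`, and one integration by parts against the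
linear weight `2x - a - b`, which takes the values `∓(b - a)` at the endpoints, produces the
trapezoid term `(b - a)(F'(a) + F'(b))` minus `2 ∫ₐᵇ F'`.
-/

open Set intervalIntegral

theorem integral_two_mul_sub_mul_deriv {f f' : ℝ → ℝ} {a b : ℝ}
    (hf : ∀ x ∈ uIcc a b, HasDerivAt f (f' x) x)
    (hf' : IntervalIntegrable f' MeasureTheory.volume a b) :
    ∫ x in a..b, (2 * x - a - b) * f' x = (b - a) * (f a + f b) - 2 * ∫ x in a..b, f x := by
  have hweight : ∀ x ∈ uIcc a b, HasDerivAt (fun x => 2 * x - a - b) 2 x := fun x _ => by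
    simpa using (((hasDerivAt_id x).const_mul 2).sub_const a).sub_const b
  rw [integral_mul_deriv_eq_deriv_mul hweight hf intervalIntegrable_const hf',
    integral_const_mul]
  ring

theorem integral_one_sub_two_mul_comp_convexCombo (f : ℝ → ℝ) {a b : ℝ} (hab : a ≠ b) :
    ∫ t in (0:ℝ)..1, (1 - 2 * t) * f (t * a + (1 - t) * b) =
      ((b - a) ^ 2)⁻¹ * ∫ x in a..b, (2 * x - a - b) * f x := by
  have hba : b - a ≠ 0 := sub_ne_zero.mpr hab.symm
  set g : ℝ → ℝ := fun x => (2 * x - a - b) / (b - a) * f x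
  have hsubst : ∀ t : ℝ, (1 - 2 * t) * f (t * a + (1 - t) * b) = g ((a - b) * t + b) := by
    intro t
    simp only [g]
    rw [show (a - b) * t + b = t * a + (1 - t) * b by ring]
    congr 1
    field_simp
    ring
  simp_rw [hsubst]
  rw [integral_comp_mul_add g (sub_ne_zero.mpr hab), mul_zero, zero_add, mul_one, sub_add_cancel,
    integral_symm, smul_eq_mul]
  simp only [g, div_mul_eq_mul_div, integral_div]
  field_simp
  ring

theorem trapezoid_identity_deriv_general (F' F'' : ℝ → ℝ) (I : Set ℝ) (a b : ℝ)
    (hab : a < b) (hsub : Icc a b ⊆ I)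
    (hF'' : ∀ x ∈ I, HasDerivAt F' (F'' x) x)
    (hint : IntervalIntegrable F'' MeasureTheory.volume a b) :
    (F' a + F' b) / 2 - (1 / (b - a)) * ∫ x in a..b, F' x =
      ((b - a) / 2) * ∫ t in (0:ℝ)..1, (1 - 2 * t) * F'' (t * a + (1 - t) * b) := by
  have hderiv : ∀ x ∈ uIcc a b, HasDerivAt F' (F'' x) x := fun x hx =>
    hF'' x (hsub (uIcc_of_le hab.le ▸ hx))
  rw [integral_one_sub_two_mul_comp_convexCombo F'' hab.ne,
    integral_two_mul_sub_mul_deriv hderiv hint]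
  have hba : b - a ≠ 0 := sub_ne_zero.mpr hab.ne'
  field_simp

theorem trapezoid_identity_deriv (F F' F'' : ℝ → ℝ) (I : Set ℝ) (a b : ℝ)
    (hI : IsOpen I) (hab : a < b) (hsub : Icc a b ⊆ I)
    (hF' : ∀ x ∈ I, HasDerivAt F (F' x) x)
    (hF'' : ∀ x ∈ I, HasDerivAt F' (F'' x) x)
    (hint : IntervalIntegrable F'' MeasureTheory.volume a b) :
    (F' a + F' b) / 2 - (1 / (b - a)) * ∫ x in a..b, F' x =
      ((b - a) / 2) * ∫ t in (0:ℝ)..1, (1 - 2 * t) * F'' (t * a + (1 - t) * b) :=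
  trapezoid_identity_deriv_general F' F'' I a b hab hsub hF'' hint
end

section
/- Let F : I → ℝ be twice differentiable on an open interval I containing [a,b] with a < b, and suppose F'' is integrable on [a,b]. Then (F(a)+F(b))/2 − (1/(b-a))·∫ₐᵇ F(x) dx = ((b-a)²/2)·∫₀¹ (t − t²)·F''(t·a+(1−t)·b) dt. -/
open Set intervalIntegral

/-!
The substitution `x = t * a + (1 - t) * b` turns `t - t ^ 2` into `(x - a) * (b - x) / (b - a) ^ 2`.
Integrating `(x - a) * (b - x) * F'' x` by parts twice, the boundary terms of the first step
vanish because the kernel vanishes at `a` and `b`, and those of the second step are the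
trapezoid sum `(b - a) * (F a + F b)`.
-/

section

variable {a b : ℝ}

theorem integral_sub_mul_sub_mul_deriv_eq {G G' : ℝ → ℝ}
    (hG : ∀ x ∈ uIcc a b, HasDerivAt G (G' x) x)
    (hG' : IntervalIntegrable G' MeasureTheory.volume a b) :
    ∫ x in a..b, (x - a) * (b - x) * G' x = -∫ x in a..b, (a + b - 2 * x) * G x := by
  have hu : ∀ x ∈ uIcc a b, HasDerivAt (fun x => (x - a) * (b - x)) (a + b - 2 * x) x :=
    fun x _ => (((hasDerivAt_id' x).sub_const a).fun_mul
      ((hasDerivAt_id' x).const_sub b)).congr_deriv (by ring)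
  rw [integral_mul_deriv_eq_deriv_mul hu hG (Continuous.intervalIntegrable (by fun_prop) _ _) hG']
  simp

theorem integral_add_sub_two_mul_mul_deriv_eq {F F' : ℝ → ℝ}
    (hF : ∀ x ∈ uIcc a b, HasDerivAt F (F' x) x)
    (hF' : IntervalIntegrable F' MeasureTheory.volume a b) :
    ∫ x in a..b, (a + b - 2 * x) * F' x = (a - b) * (F a + F b) + 2 * ∫ x in a..b, F x := by
  have hu : ∀ x ∈ uIcc a b, HasDerivAt (fun x => a + b - 2 * x) (-2) x := fun x _ => by
    simpa using ((hasDerivAt_id x).const_mul 2).const_sub (a + b)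
  rw [integral_mul_deriv_eq_deriv_mul hu hF intervalIntegrable_const hF', integral_const_mul]
  ring

theorem integral_sub_mul_sub_mul_deriv2_eq {F F' F'' : ℝ → ℝ}
    (hF : ∀ x ∈ uIcc a b, HasDerivAt F (F' x) x)
    (hF' : ∀ x ∈ uIcc a b, HasDerivAt F' (F'' x) x)
    (hF'' : IntervalIntegrable F'' MeasureTheory.volume a b) :
    ∫ x in a..b, (x - a) * (b - x) * F'' x = (b - a) * (F a + F b) - 2 * ∫ x in a..b, F x := by
  have hF'_int : IntervalIntegrable F' MeasureTheory.volume a b :=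
    ContinuousOn.intervalIntegrable fun x hx => (hF' x hx).continuousAt.continuousWithinAt
  rw [integral_sub_mul_sub_mul_deriv_eq hF' hF'', integral_add_sub_two_mul_mul_deriv_eq hF hF'_int]
  ring

theorem integral_zero_one_comp_mul_add_one_sub_mul {E : Type*} [NormedAddCommGroup E]
    [NormedSpace ℝ E] (f : ℝ → E) (hab : a ≠ b) :
    ∫ t in (0:ℝ)..1, f (t * a + (1 - t) * b) = (b - a)⁻¹ • ∫ x in a..b, f x := by
  have hc : a - b ≠ 0 := sub_ne_zero.mpr hab
  have hsubst := integral_comp_mul_add (a := 0) (b := 1) f hc b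
  simp only [mul_zero, zero_add, mul_one, sub_add_cancel] at hsubst
  rw [show (fun t : ℝ => f (t * a + (1 - t) * b)) = fun t => f ((a - b) * t + b) from
    funext fun t => by ring_nf, hsubst, integral_symm, smul_neg, ← neg_smul, ← inv_neg, neg_sub]

end

theorem trapezoid_identity_general (F F' F'' : ℝ → ℝ) (I : Set ℝ) (a b : ℝ)
    (hab : a < b) (hsub : Icc a b ⊆ I)
    (hF' : ∀ x ∈ I, HasDerivAt F (F' x) x)
    (hF'' : ∀ x ∈ I, HasDerivAt F' (F'' x) x)
    (hint : IntervalIntegrable F'' MeasureTheory.volume a b) :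
    (F a + F b) / 2 - (1 / (b - a)) * ∫ x in a..b, F x =
      ((b - a) ^ 2 / 2) * ∫ t in (0:ℝ)..1, (t - t ^ 2) * F'' (t * a + (1 - t) * b) := by
  have hsub' : uIcc a b ⊆ I := uIcc_of_le hab.le ▸ hsub
  have hba : b - a ≠ 0 := sub_ne_zero.mpr hab.ne'
  set g : ℝ → ℝ := fun x => ((b - a) ^ 2)⁻¹ * ((x - a) * (b - x) * F'' x) with hg
  have hkernel (t : ℝ) : (t - t ^ 2) * F'' (t * a + (1 - t) * b) = g (t * a + (1 - t) * b) := by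
    simp only [hg]
    field_simp
    ring
  rw [integral_congr fun t _ => hkernel t, integral_zero_one_comp_mul_add_one_sub_mul g hab.ne,
    smul_eq_mul, integral_const_mul, integral_sub_mul_sub_mul_deriv2_eq
      (fun x hx => hF' x (hsub' hx)) (fun x hx => hF'' x (hsub' hx)) hint]
  field_simp

theorem trapezoid_identity (F F' F'' : ℝ → ℝ) (I : Set ℝ) (a b : ℝ)
    (hI : IsOpen I) (hab : a < b) (hsub : Icc a b ⊆ I)
    (hF' : ∀ x ∈ I, HasDerivAt F (F' x) x)
    (hF'' : ∀ x ∈ I, HasDerivAt F' (F'' x) x)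
    (hint : IntervalIntegrable F'' MeasureTheory.volume a b) :
    (F a + F b) / 2 - (1 / (b - a)) * ∫ x in a..b, F x =
      ((b - a) ^ 2 / 2) * ∫ t in (0:ℝ)..1, (t - t ^ 2) * F'' (t * a + (1 - t) * b) :=
  trapezoid_identity_general F F' F'' I a b hab hsub hF' hF'' hint
end

section
/- Let F be twice differentiable on an open interval containing [a,b] ⊆ [0,∞) with a < b, and suppose |F''| is (h-s)₂-convex on [a,b]. Then |(F'(a)+F'(b))/2 − (1/(b-a))·∫ₐᵇ F'(x) dx| ≤ ((b-a)/2)·(|F''(a)|+|F''(b)|)·∫₀¹ |1−2t|·h(t)^s dt, assuming t ↦ |1−2t|·h(t)^s is integrable and h(t)^s = h(1-t)^s-symmetry of the integral (i.e., ∫₀¹ |1−2t| h(t)^s dt = ∫₀¹ |1−2t| h(1−t)^s dt). -/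
/-!
Substituting `x = t a + (1 - t) b` and integrating by parts against `1 - 2t` turns the
trapezoid error into `(b - a) / 2 * ∫₀¹ (1 - 2t) F''(t a + (1 - t) b) dt`. Bounding `|F''|` by
its `(h-s)₂`-convexity splits the estimate into two weighted integrals of `h t ^ s` and
`h (1 - t) ^ s`, which agree because the weight `|1 - 2t|` is invariant under `t ↦ 1 - t`.
-/

open Set intervalIntegral

theorem mul_add_one_sub_mul_mem_uIcc {a b t : ℝ} (ht : t ∈ Icc (0 : ℝ) 1) :
    t * a + (1 - t) * b ∈ uIcc a b :=
  segment_eq_uIcc a b ▸ ⟨t, 1 - t, ht.1, sub_nonneg.2 ht.2, by ring, rfl⟩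

theorem integral_comp_mul_add_one_sub_mul (f : ℝ → ℝ) {a b : ℝ} (hab : a ≠ b) :
    ∫ t in (0 : ℝ)..1, f (t * a + (1 - t) * b) = 1 / (b - a) * ∫ x in a..b, f x := by
  have hc : a - b ≠ 0 := sub_ne_zero.2 hab
  simp_rw [show ∀ t : ℝ, t * a + (1 - t) * b = (a - b) * t + b by intro t; ring]
  rw [integral_comp_mul_add f hc, mul_zero, zero_add, mul_one, sub_add_cancel,
    integral_symm a b, smul_eq_mul, ← neg_sub b a, inv_neg, one_div]
  ring

theorem IntervalIntegrable.comp_mul_add_one_sub_mul {f : ℝ → ℝ} {a b : ℝ}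
    (hf : IntervalIntegrable f MeasureTheory.volume a b) :
    IntervalIntegrable (fun t => f (t * a + (1 - t) * b)) MeasureTheory.volume 0 1 := by
  simp_rw [show ∀ t : ℝ, t * a + (1 - t) * b = (a - b) * t + b by intro t; ring]
  rcases eq_or_ne a b with rfl | hab
  · simp
  have hc : a - b ≠ 0 := sub_ne_zero.2 hab
  have := (hf.comp_add_right b).comp_mul_left (c := a - b)
  simpa [div_self hc] using this.symm

theorem abs_one_sub_two_mul_one_sub (t : ℝ) : |1 - 2 * (1 - t)| = |1 - 2 * t| := by
  rw [← abs_neg]; ring_nf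

theorem integral_abs_one_sub_two_mul_mul_comp_one_sub (φ : ℝ → ℝ) :
    ∫ t in (0 : ℝ)..1, |1 - 2 * t| * φ (1 - t) = ∫ t in (0 : ℝ)..1, |1 - 2 * t| * φ t := by
  simpa [abs_one_sub_two_mul_one_sub] using
    integral_comp_sub_left (fun t => |1 - 2 * t| * φ t) (a := 0) (b := 1) 1

theorem IntervalIntegrable.abs_one_sub_two_mul_mul_comp_one_sub {φ : ℝ → ℝ}
    (hφ : IntervalIntegrable (fun t => |1 - 2 * t| * φ t) MeasureTheory.volume 0 1) :
    IntervalIntegrable (fun t => |1 - 2 * t| * φ (1 - t)) MeasureTheory.volume 0 1 := by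
  simpa [abs_one_sub_two_mul_one_sub] using (hφ.comp_sub_left 1).symm

theorem trapezoid_sub_average_eq {f f' : ℝ → ℝ} {a b : ℝ} (hab : a ≠ b)
    (hf : ∀ x ∈ uIcc a b, HasDerivAt f (f' x) x)
    (hf' : IntervalIntegrable f' MeasureTheory.volume a b) :
    (f a + f b) / 2 - 1 / (b - a) * ∫ x in a..b, f x =
      (b - a) / 2 * ∫ t in (0 : ℝ)..1, (1 - 2 * t) * f' (t * a + (1 - t) * b) := by
  have hv : ∀ t ∈ uIcc (0 : ℝ) 1,
      HasDerivAt (fun t => f (t * a + (1 - t) * b)) (f' (t * a + (1 - t) * b) * (a - b)) t := by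
    intro t ht
    have hseg : HasDerivAt (fun t : ℝ => t * a + (1 - t) * b) (a - b) t := by
      rw [show (fun t : ℝ => t * a + (1 - t) * b) = fun t => t * (a - b) + b by ext; ring]
      simpa using ((hasDerivAt_id t).mul_const (a - b)).add_const b
    exact (hf _ (mul_add_one_sub_mul_mem_uIcc (uIcc_of_le (zero_le_one' ℝ) ▸ ht))).comp t hseg
  have hu : ∀ t ∈ uIcc (0 : ℝ) 1, HasDerivAt (fun t : ℝ => 1 - 2 * t) (-2) t := fun t _ => by
    simpa using ((hasDerivAt_id t).const_mul (2 : ℝ)).const_sub 1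
  have parts := integral_mul_deriv_eq_deriv_mul hu hv intervalIntegrable_const
    (hf'.comp_mul_add_one_sub_mul.mul_const _)
  simp only [integral_const_mul, integral_comp_mul_add_one_sub_mul f hab] at parts
  simp_rw [← mul_assoc, integral_mul_const] at parts
  norm_num at parts
  rw [one_div]
  linear_combination (1 / 2 : ℝ) * parts

theorem abs_integral_one_sub_two_mul_mul_le {g φ : ℝ → ℝ} {A B : ℝ}
    (hg : ∀ t ∈ Icc (0 : ℝ) 1, |g t| ≤ φ t * A + φ (1 - t) * B)
    (hgi : IntervalIntegrable g MeasureTheory.volume 0 1)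
    (hφ : IntervalIntegrable (fun t => |1 - 2 * t| * φ t) MeasureTheory.volume 0 1) :
    |∫ t in (0 : ℝ)..1, (1 - 2 * t) * g t| ≤ (A + B) * ∫ t in (0 : ℝ)..1, |1 - 2 * t| * φ t := by
  have hφ' := hφ.abs_one_sub_two_mul_mul_comp_one_sub
  have hwg : IntervalIntegrable (fun t => |1 - 2 * t| * |g t|) MeasureTheory.volume 0 1 :=
    hgi.abs.continuousOn_mul (by fun_prop)
  calc |∫ t in (0 : ℝ)..1, (1 - 2 * t) * g t|
      ≤ ∫ t in (0 : ℝ)..1, |1 - 2 * t| * |g t| := by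
        simpa only [Real.norm_eq_abs, abs_mul] using
          norm_integral_le_integral_norm (f := fun t => (1 - 2 * t) * g t) zero_le_one
    _ ≤ ∫ t in (0 : ℝ)..1, (|1 - 2 * t| * φ t * A + |1 - 2 * t| * φ (1 - t) * B) := by
        refine integral_mono_on zero_le_one hwg ((hφ.mul_const A).add (hφ'.mul_const B)) ?_
        intro t ht
        calc |1 - 2 * t| * |g t| ≤ |1 - 2 * t| * (φ t * A + φ (1 - t) * B) :=
              mul_le_mul_of_nonneg_left (hg t ht) (abs_nonneg _)
          _ = _ := by ring
    _ = (A + B) * ∫ t in (0 : ℝ)..1, |1 - 2 * t| * φ t := by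
        rw [integral_add (hφ.mul_const A) (hφ'.mul_const B), integral_mul_const,
          integral_mul_const, integral_abs_one_sub_two_mul_mul_comp_one_sub]
        ring

theorem trapezoid_ineq_hs2_general (h : ℝ → ℝ) (s : ℝ) (F' F'' : ℝ → ℝ) (I : Set ℝ) (a b : ℝ)
    (hab : a < b) (hsub : Icc a b ⊆ I)
    (hF'' : ∀ x ∈ I, HasDerivAt F' (F'' x) x)
    (hint : IntervalIntegrable F'' MeasureTheory.volume a b)
    -- |F''| is (h-s)₂-convex on [a,b]
    (hconv : ∀ t ∈ Icc (0:ℝ) 1,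
      |F'' (t * a + (1 - t) * b)| ≤ h t ^ s * |F'' a| + h (1 - t) ^ s * |F'' b|)
    (hint2 : IntervalIntegrable (fun t => |1 - 2 * t| * h t ^ s) MeasureTheory.volume 0 1) :
    |(F' a + F' b) / 2 - (1 / (b - a)) * ∫ x in a..b, F' x| ≤
      ((b - a) / 2) * (|F'' a| + |F'' b|) * ∫ t in (0:ℝ)..1, |1 - 2 * t| * h t ^ s := by
  have hderiv : ∀ x ∈ uIcc a b, HasDerivAt F' (F'' x) x := fun x hx =>
    hF'' x (hsub (uIcc_of_le hab.le ▸ hx))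
  have hhalf : 0 < (b - a) / 2 := by linarith
  rw [trapezoid_sub_average_eq hab.ne hderiv hint, abs_mul, abs_of_pos hhalf, mul_assoc]
  exact mul_le_mul_of_nonneg_left
    (abs_integral_one_sub_two_mul_mul_le (φ := fun t => h t ^ s) hconv
      hint.comp_mul_add_one_sub_mul hint2) hhalf.le

theorem trapezoid_ineq_hs2 (h : ℝ → ℝ) (s : ℝ) (F F' F'' : ℝ → ℝ) (I : Set ℝ) (a b : ℝ)
    (hh_nonneg : ∀ t, 0 ≤ h t) (hh_ne : ∃ t, h t ≠ 0) (hs : s ∈ Ioc (0:ℝ) 1)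
    (hI : IsOpen I) (ha : 0 ≤ a) (hab : a < b) (hsub : Icc a b ⊆ I)
    (hF' : ∀ x ∈ I, HasDerivAt F (F' x) x)
    (hF'' : ∀ x ∈ I, HasDerivAt F' (F'' x) x)
    (hint : IntervalIntegrable F'' MeasureTheory.volume a b)
    -- |F''| is (h-s)₂-convex on [a,b]
    (hconv : ∀ t ∈ Icc (0:ℝ) 1,
      |F'' (t * a + (1 - t) * b)| ≤ h t ^ s * |F'' a| + h (1 - t) ^ s * |F'' b|)
    (hint2 : IntervalIntegrable (fun t => |1 - 2 * t| * h t ^ s) MeasureTheory.volume 0 1)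
    (hsymm : ∫ t in (0:ℝ)..1, |1 - 2 * t| * h t ^ s
           = ∫ t in (0:ℝ)..1, |1 - 2 * t| * h (1 - t) ^ s) :
    |(F' a + F' b) / 2 - (1 / (b - a)) * ∫ x in a..b, F' x| ≤
      ((b - a) / 2) * (|F'' a| + |F'' b|) * ∫ t in (0:ℝ)..1, |1 - 2 * t| * h t ^ s :=
  trapezoid_ineq_hs2_general h s F' F'' I a b hab hsub hF'' hint hconv hint2
end

section
/- Let F be twice differentiable on an open interval containing [a,b] with a < b, F'' integrable, and suppose |F''| is convex on [a,b] (i.e., (h-s)₂-convex with h(t)=t, s=1). Then |(F'(a)+F'(b))/2 − (1/(b-a))·∫ₐᵇ F'(x) dx| ≤ (b-a)·(|F''(a)|+|F''(b)|)/8. -/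
/-! Integrating by parts against the kernel `x - (a + b) / 2` turns the trapezoid error into
`(1 / (b - a)) * ∫ (x - (a + b) / 2) * F'' x`. Convexity bounds `|F''|` by its chord, and the
resulting weight integrates to `(b - a) ^ 3 * (|F'' a| + |F'' b|) / 8`: reflecting
`x ↦ a + b - x` turns the chord into its average `(|F'' a| + |F'' b|) / 2`, and
`∫ₐᵇ |x - (a + b) / 2| = (b - a) ^ 2 / 4`. -/

open Set intervalIntegral Interval

theorem integral_sub_midpoint_mul_deriv {f f' : ℝ → ℝ} {a b : ℝ}
    (hf : ∀ x ∈ uIcc a b, HasDerivAt f (f' x) x)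
    (hf' : IntervalIntegrable f' MeasureTheory.volume a b) :
    ∫ x in a..b, (x - (a + b) / 2) * f' x = (b - a) / 2 * (f a + f b) - ∫ x in a..b, f x := by
  have hparts := integral_mul_deriv_eq_deriv_mul
    (fun x _ => (hasDerivAt_id x).sub_const ((a + b) / 2)) hf intervalIntegrable_const hf'
  simp only [id, one_mul] at hparts
  rw [hparts]
  ring

theorem integral_abs_sub_midpoint {a b : ℝ} (hab : a ≤ b) :
    ∫ x in a..b, |x - (a + b) / 2| = (b - a) ^ 2 / 4 := by
  set c := (a + b) / 2 with hc
  have hac : a ≤ c := by linarith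
  have hcb : c ≤ b := by linarith
  have half (u : ℝ) : ∫ x in Ι c u, |x - c| = (u - c) ^ 2 / 2 := by
    simpa [sq_abs, one_add_one_eq_two] using integral_pow_abs_sub_uIoc (a := c) (b := u) (n := 1)
  have hcont : Continuous fun x => |x - c| := by fun_prop
  rw [← integral_add_adjacent_intervals (hcont.intervalIntegrable a c)
    (hcont.intervalIntegrable c b), integral_of_le hac, integral_of_le hcb,
    ← uIoc_of_ge hac, ← uIoc_of_le hcb, half, half, hc]
  ring

theorem integral_abs_sub_midpoint_mul_chord {a b : ℝ} (A B : ℝ) (hab : a ≤ b) :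
    ∫ x in a..b, |x - (a + b) / 2| * ((b - x) * A + (x - a) * B) =
      (b - a) ^ 3 * (A + B) / 8 := by
  set c := (a + b) / 2
  have hreflect : ∫ x in a..b, |x - c| * ((b - x) * A + (x - a) * B) =
      ∫ x in a..b, |x - c| * ((x - a) * A + (b - x) * B) := by
    have hcomp := integral_comp_sub_left (a := a) (b := b)
      (fun x => |x - c| * ((b - x) * A + (x - a) * B)) (a + b)
    rw [add_sub_cancel_right, add_sub_cancel_left] at hcomp
    rw [← hcomp]
    congr 1 with x
    rw [show a + b - x - c = -(x - c) by ring, abs_neg]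
    ring
  have hsum : 2 * ∫ x in a..b, |x - c| * ((b - x) * A + (x - a) * B) =
      (b - a) * (A + B) * ∫ x in a..b, |x - c| := by
    rw [two_mul]
    nth_rw 2 [hreflect]
    rw [← integral_add (Continuous.intervalIntegrable (by fun_prop) a b)
      (Continuous.intervalIntegrable (by fun_prop) a b), ← integral_const_mul]
    congr 1 with x
    ring
  rw [integral_abs_sub_midpoint hab] at hsum
  linarith

theorem le_chord_of_forall_le_convex_comb {φ : ℝ → ℝ} {a b x : ℝ} (hab : a < b)
    (hφ : ∀ t ∈ Icc (0 : ℝ) 1, φ (t * a + (1 - t) * b) ≤ t * φ a + (1 - t) * φ b)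
    (hx : x ∈ Icc a b) :
    φ x ≤ ((b - x) * φ a + (x - a) * φ b) / (b - a) := by
  have hba : 0 < b - a := sub_pos.2 hab
  have ht : (b - x) / (b - a) ∈ Icc (0 : ℝ) 1 :=
    ⟨div_nonneg (by linarith [hx.2]) hba.le, (div_le_one hba).2 (by linarith [hx.1])⟩
  convert hφ _ ht using 1
  · congr 1
    field_simp
    ring
  · field_simp
    ring

theorem abs_integral_sub_midpoint_mul_le {f : ℝ → ℝ} {a b : ℝ} (hab : a < b)
    (hf : ∀ t ∈ Icc (0 : ℝ) 1, |f (t * a + (1 - t) * b)| ≤ t * |f a| + (1 - t) * |f b|) :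
    |∫ x in a..b, (x - (a + b) / 2) * f x| ≤ (b - a) ^ 2 * (|f a| + |f b|) / 8 := by
  have hba : 0 < b - a := sub_pos.2 hab
  calc |∫ x in a..b, (x - (a + b) / 2) * f x|
      ≤ ∫ x in a..b, |x - (a + b) / 2| * ((b - x) * |f a| + (x - a) * |f b|) / (b - a) := by
        rw [← Real.norm_eq_abs]
        refine norm_integral_le_of_norm_le hab.le (.of_forall fun x hx => ?_) ?_
        · rw [Real.norm_eq_abs, abs_mul, mul_div_assoc]
          exact mul_le_mul_of_nonneg_left (le_chord_of_forall_le_convex_comb (φ := fun x => |f x|)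
            hab hf (Ioc_subset_Icc_self hx)) (abs_nonneg _)
        · exact Continuous.intervalIntegrable (by fun_prop) a b
    _ = (b - a) ^ 2 * (|f a| + |f b|) / 8 := by
        rw [integral_div, integral_abs_sub_midpoint_mul_chord _ _ hab.le]
        field_simp

theorem trapezoid_ineq_convex_general (F' F'' : ℝ → ℝ) (I : Set ℝ) (a b : ℝ)
    (hab : a < b) (hsub : Icc a b ⊆ I)
    (hF'' : ∀ x ∈ I, HasDerivAt F' (F'' x) x)
    (hint : IntervalIntegrable F'' MeasureTheory.volume a b)
    (hconv : ∀ t ∈ Icc (0:ℝ) 1,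
      |F'' (t * a + (1 - t) * b)| ≤ t * |F'' a| + (1 - t) * |F'' b|) :
    |(F' a + F' b) / 2 - (1 / (b - a)) * ∫ x in a..b, F' x| ≤
      (b - a) * (|F'' a| + |F'' b|) / 8 := by
  have hba : 0 < b - a := sub_pos.2 hab
  have hderiv : ∀ x ∈ uIcc a b, HasDerivAt F' (F'' x) x := fun x hx =>
    hF'' x (hsub (by rwa [uIcc_of_le hab.le] at hx))
  have herror : (F' a + F' b) / 2 - (1 / (b - a)) * ∫ x in a..b, F' x =
      (∫ x in a..b, (x - (a + b) / 2) * F'' x) / (b - a) := by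
    rw [integral_sub_midpoint_mul_deriv hderiv hint]
    field_simp
  rw [herror, abs_div, abs_of_pos hba, div_le_iff₀ hba]
  calc _ ≤ (b - a) ^ 2 * (|F'' a| + |F'' b|) / 8 := abs_integral_sub_midpoint_mul_le hab hconv
    _ = _ := by ring

theorem trapezoid_ineq_convex (F F' F'' : ℝ → ℝ) (I : Set ℝ) (a b : ℝ)
    (hI : IsOpen I) (hab : a < b) (hsub : Icc a b ⊆ I)
    (hF' : ∀ x ∈ I, HasDerivAt F (F' x) x)
    (hF'' : ∀ x ∈ I, HasDerivAt F' (F'' x) x)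
    (hint : IntervalIntegrable F'' MeasureTheory.volume a b)
    (hconv : ∀ t ∈ Icc (0:ℝ) 1,
      |F'' (t * a + (1 - t) * b)| ≤ t * |F'' a| + (1 - t) * |F'' b|) :
    |(F' a + F' b) / 2 - (1 / (b - a)) * ∫ x in a..b, F' x| ≤
      (b - a) * (|F'' a| + |F'' b|) / 8 :=
  trapezoid_ineq_convex_general F' F'' I a b hab hsub hF'' hint hconv
end

section
/- Let p > 1 and q = p/(p−1). Let F be twice differentiable on an open interval containing [a,b] ⊆ [0,∞), a < b, F'' integrable, and suppose |F''|^q is (h-s)₂-convex on [a,b]. Then |(F'(a)+F'(b))/2 − (1/(b-a))·∫ₐᵇ F'(x) dx| ≤ ((b-a)/(2·(p+1)^(1/p)))·(K·(|F''(a)|^q + |F''(b)|^q))^(1/q), where K = ∫₀¹ h(t)^s dt. -/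
/-!
Integrating by parts against the weight `1 - 2t` gives the identity
`(F'(a) + F'(b))/2 - (b-a)⁻¹ ∫ₐᵇ F' = (b-a)/2 · ∫₀¹ (1 - 2t) F''(ta + (1-t)b) dt`.
Hölder's inequality splits the right-hand integral into `(∫₀¹ |1 - 2t|^p)^(1/p)`,
which equals `(p+1)^(-1/p)`, and `(∫₀¹ |F''(ta + (1-t)b)|^q)^(1/q)`. Integrating the
`(h-s)₂`-convexity inequality over `[0,1]`, where `t ↦ h(1-t)^s` has the same integral `K`
as `t ↦ h(t)^s`, bounds the latter integral by `K (|F''(a)|^q + |F''(b)|^q)`.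
-/

open Set intervalIntegral MeasureTheory

theorem integral_abs_one_sub_two_mul_rpow {p : ℝ} (hp : 0 ≤ p) :
    ∫ t in (0:ℝ)..1, |1 - 2 * t| ^ p = 1 / (p + 1) := by
  have hcont : Continuous fun x : ℝ => |x| ^ p := continuous_abs.rpow_const fun _ => Or.inr hp
  have hright : ∫ x in (0:ℝ)..1, |x| ^ p = 1 / (p + 1) := by
    rw [integral_congr fun x hx => by rw [abs_of_nonneg (by simpa using hx.1 : (0:ℝ) ≤ x)],
      integral_rpow (Or.inl (by linarith))]
    simp [(by linarith : p + 1 ≠ 0)]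
  have hleft : ∫ x in (-1:ℝ)..0, |x| ^ p = ∫ x in (0:ℝ)..1, |x| ^ p := by
    simpa using (integral_comp_neg (a := (0:ℝ)) (b := 1) fun x => |x| ^ p).symm
  rw [integral_comp_sub_mul (fun x => |x| ^ p) two_ne_zero,
    ← integral_add_adjacent_intervals (b := 0) (hcont.intervalIntegrable _ _)
      (hcont.intervalIntegrable _ _)]
  norm_num [hleft, hright]
  ring

theorem intervalIntegral.integral_comp_convexCombination {E : Type*} [NormedAddCommGroup E]
    [NormedSpace ℝ E] {a b : ℝ} (f : ℝ → E) (hab : a ≠ b) :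
    ∫ t in (0:ℝ)..1, f (t * a + (1 - t) * b) = (b - a)⁻¹ • ∫ x in a..b, f x := by
  simp_rw [show ∀ t : ℝ, t * a + (1 - t) * b = b - (b - a) * t from fun t => by ring]
  rw [integral_comp_sub_mul f (sub_ne_zero.2 hab.symm)]
  simp

theorem IntervalIntegrable.comp_convexCombination {E : Type*} [NormedAddCommGroup E] {a b : ℝ}
    {f : ℝ → E} (hf : IntervalIntegrable f volume a b) :
    IntervalIntegrable (fun t => f (t * a + (1 - t) * b)) volume 0 1 := by
  simp_rw [show ∀ t : ℝ, t * a + (1 - t) * b = b - (b - a) * t from fun t => by ring]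
  rcases eq_or_ne a b with rfl | hab
  · simp
  have := (hf.comp_sub_left b).comp_mul_left (c := b - a)
  simpa [div_self (sub_ne_zero.2 hab.symm)] using this.symm

theorem IntervalIntegrable.comp_one_sub {E : Type*} [NormedAddCommGroup E] {f : ℝ → E}
    (hf : IntervalIntegrable f volume 0 1) :
    IntervalIntegrable (fun t => f (1 - t)) volume 0 1 := by
  simpa using (hf.comp_sub_left 1).symm

theorem trapezoid_identity_s12 {f f' : ℝ → ℝ} {a b : ℝ} (hab : a ≠ b)
    (hf : ∀ x ∈ uIcc a b, HasDerivAt f (f' x) x) (hf' : IntervalIntegrable f' volume a b) :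
    (f a + f b) / 2 - (1 / (b - a)) * ∫ x in a..b, f x =
      (b - a) / 2 * ∫ t in (0:ℝ)..1, (1 - 2 * t) * f' (t * a + (1 - t) * b) := by
  have hcomb : ∀ t ∈ uIcc (0:ℝ) 1, HasDerivAt (fun t => f (t * a + (1 - t) * b))
      ((a - b) * f' (t * a + (1 - t) * b)) t := by
    intro t ht
    rw [uIcc_of_le zero_le_one] at ht
    have hmem : t * a + (1 - t) * b ∈ uIcc a b :=
      convex_uIcc a b left_mem_uIcc right_mem_uIcc ht.1 (sub_nonneg.2 ht.2) (by ring)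
    have hline : HasDerivAt (fun t : ℝ => t * a + (1 - t) * b) (a - b) t :=
      ((hasDerivAt_mul_const (a - b)).const_add b).congr_of_eventuallyEq
        (.of_forall fun u => by ring)
    have := (hf _ hmem).comp t hline
    rwa [mul_comm] at this
  have hweight : ∀ t ∈ uIcc (0:ℝ) 1, HasDerivAt (fun t : ℝ => 1 - 2 * t) (-2) t :=
    fun t _ => by simpa using ((hasDerivAt_id t).const_mul 2).const_sub 1
  have hparts := integral_mul_deriv_eq_deriv_mul hweight hcomb intervalIntegrable_const
    (hf'.comp_convexCombination.const_mul (a - b))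
  simp only [mul_left_comm _ (a - b), intervalIntegral.integral_const_mul,
    integral_comp_convexCombination f hab, smul_eq_mul] at hparts
  norm_num at hparts
  linear_combination (1 / 2 : ℝ) * hparts

theorem abs_intervalIntegral_mul_le_Lp_mul_Lq {p q a b : ℝ} (hab : a ≤ b)
    (hpq : p.HolderConjugate q) {f g : ℝ → ℝ}
    (hf : AEStronglyMeasurable f (volume.restrict (Ioc a b)))
    (hg : AEStronglyMeasurable g (volume.restrict (Ioc a b)))
    (hfp : IntervalIntegrable (fun x => |f x| ^ p) volume a b)
    (hgq : IntervalIntegrable (fun x => |g x| ^ q) volume a b) :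
    |∫ x in a..b, f x * g x| ≤
      (∫ x in a..b, |f x| ^ p) ^ (1 / p) * (∫ x in a..b, |g x| ^ q) ^ (1 / q) := by
  have memLp {r : ℝ} (hr : 0 < r) {u : ℝ → ℝ}
      (hu : AEStronglyMeasurable u (volume.restrict (Ioc a b)))
      (hur : IntervalIntegrable (fun x => |u x| ^ r) volume a b) :
      MemLp u (ENNReal.ofReal r) (volume.restrict (Ioc a b)) := by
    rw [← integrable_norm_rpow_iff hu (by simpa using hr) ENNReal.ofReal_ne_top,
      ENNReal.toReal_ofReal hr.le]
    exact (intervalIntegrable_iff_integrableOn_Ioc_of_le hab).1 hur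
  calc |∫ x in a..b, f x * g x| ≤ ∫ x in a..b, |f x| * |g x| := by
        simpa only [abs_mul] using abs_integral_le_integral_abs hab (f := fun x => f x * g x)
    _ ≤ _ := by
        simp only [integral_of_le hab]
        exact integral_mul_norm_le_Lp_mul_Lq hpq (memLp hpq.pos hf hfp)
          (memLp hpq.symm.pos hg hgq)

/-- The `(h-s)₂`-convexity inequality of `φ`, required only for the endpoints `a`, `b`. -/
def HSConvex₂ (h : ℝ → ℝ) (s : ℝ) (φ : ℝ → ℝ) (a b : ℝ) : Prop :=
  ∀ t ∈ Icc (0:ℝ) 1, φ (t * a + (1 - t) * b) ≤ h t ^ s * φ a + h (1 - t) ^ s * φ b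

namespace HSConvex₂

variable {h φ : ℝ → ℝ} {s a b : ℝ}

theorem intervalIntegrable_comp (hφ : HSConvex₂ h s φ a b) (hφ0 : ∀ x, 0 ≤ φ x)
    (hm : AEStronglyMeasurable (fun t => φ (t * a + (1 - t) * b)) (volume.restrict (Ioc 0 1)))
    (hh : IntervalIntegrable (fun t => h t ^ s) volume 0 1) :
    IntervalIntegrable (fun t => φ (t * a + (1 - t) * b)) volume 0 1 := by
  rw [← uIoc_of_le zero_le_one] at hm
  refine ((hh.mul_const (φ a)).add (hh.comp_one_sub.mul_const (φ b))).mono_fun' hm ?_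
  rw [uIoc_of_le zero_le_one]
  refine (ae_restrict_iff' measurableSet_Ioc).2 (.of_forall fun t ht => ?_)
  dsimp only
  rw [Real.norm_of_nonneg (hφ0 _)]
  exact hφ t (Ioc_subset_Icc_self ht)

theorem integral_comp_le (hφ : HSConvex₂ h s φ a b) (hφ0 : ∀ x, 0 ≤ φ x)
    (hm : AEStronglyMeasurable (fun t => φ (t * a + (1 - t) * b)) (volume.restrict (Ioc 0 1)))
    (hh : IntervalIntegrable (fun t => h t ^ s) volume 0 1) :
    ∫ t in (0:ℝ)..1, φ (t * a + (1 - t) * b) ≤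
      (∫ t in (0:ℝ)..1, h t ^ s) * (φ a + φ b) := by
  have hsymm : ∫ t in (0:ℝ)..1, h (1 - t) ^ s = ∫ t in (0:ℝ)..1, h t ^ s := by
    simpa using integral_comp_sub_left (fun t => h t ^ s) (1:ℝ) (a := 0) (b := 1)
  calc ∫ t in (0:ℝ)..1, φ (t * a + (1 - t) * b)
      ≤ ∫ t in (0:ℝ)..1, (h t ^ s * φ a + h (1 - t) ^ s * φ b) :=
        integral_mono_on zero_le_one (hφ.intervalIntegrable_comp hφ0 hm hh)
          ((hh.mul_const _).add (hh.comp_one_sub.mul_const _)) hφ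
    _ = _ := by
        rw [intervalIntegral.integral_add (hh.mul_const _) (hh.comp_one_sub.mul_const _),
          intervalIntegral.integral_mul_const, intervalIntegral.integral_mul_const, hsymm]
        ring

end HSConvex₂

theorem trapezoid_ineq_holder_hs2_general (h : ℝ → ℝ) (s p q : ℝ)
    (F' F'' : ℝ → ℝ) (I : Set ℝ) (a b : ℝ)
    (hp : 1 < p) (hq : q = p / (p - 1))
    (hh_int : IntervalIntegrable (fun t => h t ^ s) MeasureTheory.volume 0 1)
    (hab : a < b) (hsub : Icc a b ⊆ I)
    (hF'' : ∀ x ∈ I, HasDerivAt F' (F'' x) x)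
    (hint : IntervalIntegrable F'' MeasureTheory.volume a b)
    -- |F''|^q is (h-s)₂-convex on [a,b]
    (hconv : ∀ t ∈ Icc (0:ℝ) 1,
      |F'' (t * a + (1 - t) * b)| ^ q ≤ h t ^ s * |F'' a| ^ q + h (1 - t) ^ s * |F'' b| ^ q) :
    |(F' a + F' b) / 2 - (1 / (b - a)) * ∫ x in a..b, F' x| ≤
      ((b - a) / (2 * (p + 1) ^ (1 / p))) *
        ((∫ t in (0:ℝ)..1, h t ^ s) * (|F'' a| ^ q + |F'' b| ^ q)) ^ (1 / q) := by
  have hpq : p.HolderConjugate q := (Real.holderConjugate_iff_eq_conjExponent hp).2 hq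
  have hq0 : 0 < q := hpq.symm.pos
  have hconv' : HSConvex₂ h s (fun x => |F'' x| ^ q) a b := hconv
  have hφ0 (x : ℝ) : 0 ≤ |F'' x| ^ q := by positivity
  have hgm : AEStronglyMeasurable (fun t => F'' (t * a + (1 - t) * b))
      (volume.restrict (Ioc 0 1)) :=
    hint.comp_convexCombination.1.aestronglyMeasurable
  have hgqm := (continuous_abs.rpow_const fun _ => Or.inr hq0.le).comp_aestronglyMeasurable hgm
  rw [trapezoid_identity_s12 hab.ne (fun x hx => hF'' x (hsub (uIcc_of_le hab.le ▸ hx))) hint,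
    abs_mul, abs_of_pos (by linarith : 0 < (b - a) / 2)]
  calc (b - a) / 2 * |∫ t in (0:ℝ)..1, (1 - 2 * t) * F'' (t * a + (1 - t) * b)|
      ≤ (b - a) / 2 * ((∫ t in (0:ℝ)..1, |1 - 2 * t| ^ p) ^ (1 / p) *
          (∫ t in (0:ℝ)..1, |F'' (t * a + (1 - t) * b)| ^ q) ^ (1 / q)) := by
        gcongr
        have hw : Continuous fun t : ℝ => |1 - 2 * t| ^ p :=
          (by fun_prop : Continuous fun t : ℝ => 1 - 2 * t).abs.rpow_const
            fun _ => Or.inr hpq.nonneg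
        exact abs_intervalIntegral_mul_le_Lp_mul_Lq (f := fun t => 1 - 2 * t) zero_le_one hpq
          (by fun_prop) hgm (hw.intervalIntegrable _ _)
          (hconv'.intervalIntegrable_comp hφ0 hgqm hh_int)
    _ ≤ (b - a) / 2 * ((1 / (p + 1)) ^ (1 / p) *
          ((∫ t in (0:ℝ)..1, h t ^ s) * (|F'' a| ^ q + |F'' b| ^ q)) ^ (1 / q)) := by
        rw [integral_abs_one_sub_two_mul_rpow (by linarith)]
        gcongr
        · exact integral_nonneg zero_le_one fun t _ => hφ0 _
        · exact hconv'.integral_comp_le hφ0 hgqm hh_int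
    _ = _ := by
        rw [one_div (p + 1), Real.inv_rpow (by linarith)]
        field_simp

theorem trapezoid_ineq_holder_hs2 (h : ℝ → ℝ) (s p q : ℝ)
    (F F' F'' : ℝ → ℝ) (I : Set ℝ) (a b : ℝ)
    (hh_nonneg : ∀ t, 0 ≤ h t) (hh_ne : ∃ t, h t ≠ 0) (hs : s ∈ Ioc (0:ℝ) 1)
    (hp : 1 < p) (hq : q = p / (p - 1))
    (hh_int : IntervalIntegrable (fun t => h t ^ s) MeasureTheory.volume 0 1)
    (hI : IsOpen I) (ha : 0 ≤ a) (hab : a < b) (hsub : Icc a b ⊆ I)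
    (hF' : ∀ x ∈ I, HasDerivAt F (F' x) x)
    (hF'' : ∀ x ∈ I, HasDerivAt F' (F'' x) x)
    (hint : IntervalIntegrable F'' MeasureTheory.volume a b)
    -- |F''|^q is (h-s)₂-convex on [a,b]
    (hconv : ∀ t ∈ Icc (0:ℝ) 1,
      |F'' (t * a + (1 - t) * b)| ^ q ≤ h t ^ s * |F'' a| ^ q + h (1 - t) ^ s * |F'' b| ^ q) :
    |(F' a + F' b) / 2 - (1 / (b - a)) * ∫ x in a..b, F' x| ≤
      ((b - a) / (2 * (p + 1) ^ (1 / p))) *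
        ((∫ t in (0:ℝ)..1, h t ^ s) * (|F'' a| ^ q + |F'' b| ^ q)) ^ (1 / q) :=
  trapezoid_ineq_holder_hs2_general h s p q F' F'' I a b hp hq hh_int hab hsub hF'' hint hconv
end
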